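/- arXiv:1002.4662 — 8 statements merged into one kernel-verified Lean document; each statement's English description precedes it below -/
import Mathlib

section
/- Let p be a prime and let Z/p act on the polynomial ring F_p[x_1,...,x_m, y_1,...,y_m] by σ(y_i) = y_i + x_i and σ(x_i) = x_i. Then the image of the invariant ring F_p[x_1,...,x_m,y_1,...,y_m]^{Z/p} under the quotient map sending each x_i to 0 is exactly F_p[y_1^p, ..., y_m^p]. -/
/-!
Write `g` for the image of an invariant `f`. Differentiating `σ f = f` in `x_i` gives
`σ (∂f/∂x_i + ∂f/∂y_i) = ∂f/∂x_i`, and reducing modulo the `x`'s, which `σ` does not change,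
leaves `∂g/∂y_i = 0`. Over `𝔽_p` this forces every exponent of `g` to be divisible by `p`,
so `g ∈ 𝔽_p[y_1^p, …, y_m^p]`. Conversely, `y_i^p` is the image of the invariant norm
`∏_{c ∈ 𝔽_p} (y_i + c x_i) = y_i^p - x_i^(p-1) y_i`.
-/

open MvPolynomial

namespace MvPolynomial

variable {R σ τ : Type*} [CommSemiring R]

theorem pderiv_aeval [Fintype σ] (φ : σ → MvPolynomial τ R) (i : τ) (f : MvPolynomial σ R) :
    pderiv i (aeval φ f) = ∑ j, aeval φ (pderiv j f) * pderiv i (φ j) := by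
  classical
  induction f using MvPolynomial.induction_on with
  | C a => simp
  | add f g hf hg => simp only [map_add, hf, hg, add_mul, Finset.sum_add_distrib]
  | mul_X f k hf =>
    simp only [map_mul, aeval_X, Derivation.leibniz, smul_eq_mul, hf, pderiv_X, Pi.single_apply,
      map_add, mul_ite, mul_one, mul_zero, apply_ite (aeval φ), map_zero, add_mul, ite_mul, zero_mul,
      Finset.sum_add_distrib, Finset.sum_ite_eq, Finset.mem_univ, if_true, Finset.mul_sum, mul_assoc]

theorem exists_expand_eq_of_dvd {p : ℕ} {g : MvPolynomial σ R}
    (hg : ∀ d ∈ g.support, ∀ i, p ∣ d i) : ∃ h, expand p h = g := by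
  refine ⟨∑ d ∈ g.support, monomial (d.mapRange (· / p) (Nat.zero_div _)) (coeff d g), ?_⟩
  conv_rhs => rw [g.as_sum]
  rw [map_sum]
  refine Finset.sum_congr rfl fun d hd => ?_
  rw [expand_monomial]
  congr
  ext j
  simpa using Nat.mul_div_cancel' (hg d hd j)

theorem dvd_of_mem_support_of_pderiv_eq_zero [NoZeroDivisors R] (p : ℕ) [CharP R p]
    {g : MvPolynomial σ R} {i : σ} (hg : pderiv i g = 0) {d : σ →₀ ℕ} (hd : d ∈ g.support) :
    p ∣ d i := by
  classical
  obtain hdi | hdi := Nat.eq_zero_or_pos (d i)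
  · simp [hdi]
  have hcoeff : coeff d g * (d i : R) = 0 := by
    have h := coeff_pderiv (i := i) g (d - Finsupp.single i 1)
    rwa [hg, coeff_zero, tsub_add_cancel_of_le (Finsupp.single_le_iff.mpr hdi), Finsupp.tsub_apply,
      Finsupp.single_eq_same, ← Nat.cast_add_one, Nat.sub_add_cancel hdi, eq_comm] at h
  exact (CharP.cast_eq_zero_iff R p _).mp
    ((mul_eq_zero.mp hcoeff).resolve_left (mem_support_iff.mp hd))

theorem exists_expand_eq_of_pderiv_eq_zero [NoZeroDivisors R] (p : ℕ) [CharP R p]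
    {g : MvPolynomial σ R} (hg : ∀ i, pderiv i g = 0) : ∃ h, expand p h = g :=
  exists_expand_eq_of_dvd fun _ hd i => dvd_of_mem_support_of_pderiv_eq_zero p (hg i) hd

section Shear

variable {R ι : Type*} [CommRing R]

noncomputable def shear : MvPolynomial (ι ⊕ ι) R →ₐ[R] MvPolynomial (ι ⊕ ι) R :=
  aeval (Sum.elim (fun i => X (Sum.inl i)) (fun i => X (Sum.inr i) + X (Sum.inl i)))

noncomputable def reduceInl : MvPolynomial (ι ⊕ ι) R →ₐ[R] MvPolynomial ι R :=
  aeval (Sum.elim (fun _ => 0) X)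

theorem reduceInl_shear (f : MvPolynomial (ι ⊕ ι) R) : reduceInl (shear f) = reduceInl f := by
  rw [← AlgHom.comp_apply]
  exact DFunLike.congr_fun (algHom_ext fun j => by cases j <;> simp [shear, reduceInl]) f

theorem pderiv_inl_shear [Fintype ι] (f : MvPolynomial (ι ⊕ ι) R) (i : ι) :
    pderiv (Sum.inl i) (shear f) = shear (pderiv (Sum.inl i) f + pderiv (Sum.inr i) f) := by
  classical
  rw [shear, pderiv_aeval]
  simp [Fintype.sum_sum_type, pderiv_X, Pi.single_apply]

theorem pderiv_reduceInl [Fintype ι] (f : MvPolynomial (ι ⊕ ι) R) (i : ι) :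
    pderiv i (reduceInl f) = reduceInl (pderiv (Sum.inr i) f) := by
  classical
  rw [reduceInl, pderiv_aeval]
  simp [Fintype.sum_sum_type, pderiv_X, Pi.single_apply]

theorem pderiv_reduceInl_eq_zero_of_shear_eq [Fintype ι] {f : MvPolynomial (ι ⊕ ι) R}
    (hf : shear f = f) (i : ι) : pderiv i (reduceInl f) = 0 := by
  have h := congrArg reduceInl (pderiv_inl_shear f i)
  rw [hf, reduceInl_shear, map_add, left_eq_add] at h
  rw [pderiv_reduceInl, h]

theorem exists_expand_eq_reduceInl_of_shear_eq [Fintype ι] [NoZeroDivisors R] (p : ℕ) [CharP R p]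
    {f : MvPolynomial (ι ⊕ ι) R} (hf : shear f = f) : ∃ h, expand p h = reduceInl f :=
  exists_expand_eq_of_pderiv_eq_zero p (pderiv_reduceInl_eq_zero_of_shear_eq hf)

/-- The norm `∏_{c ∈ 𝔽_p} (y_i + c x_i)` of `y_i`, multiplied out. -/
noncomputable def normInr (p : ℕ) (i : ι) : MvPolynomial (ι ⊕ ι) R :=
  X (Sum.inr i) ^ p - X (Sum.inl i) ^ (p - 1) * X (Sum.inr i)

theorem shear_normInr (p : ℕ) [Fact p.Prime] [CharP R p] (i : ι) :
    shear (normInr p i : MvPolynomial (ι ⊕ ι) R) = normInr p i := by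
  simp only [normInr, shear, map_sub, map_mul, map_pow, aeval_X, Sum.elim_inl, Sum.elim_inr]
  rw [add_pow_char, mul_add, pow_sub_one_mul (Fact.out : p.Prime).ne_zero]
  ring

theorem reduceInl_normInr {p : ℕ} (hp : 1 < p) (i : ι) :
    reduceInl (normInr p i : MvPolynomial (ι ⊕ ι) R) = X i ^ p := by
  simp [normInr, reduceInl, zero_pow (Nat.sub_ne_zero_of_lt hp)]

theorem exists_shear_eq_and_reduceInl_eq_expand (p : ℕ) [Fact p.Prime] [CharP R p]
    (h : MvPolynomial ι R) : ∃ f, shear f = f ∧ reduceInl f = expand p h := by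
  refine ⟨aeval (normInr p) h, ?_, ?_⟩
  · rw [← AlgHom.comp_apply, comp_aeval]
    simp only [shear_normInr]
  · rw [← AlgHom.comp_apply, comp_aeval]
    simp only [reduceInl_normInr (Fact.out : p.Prime).one_lt]
    rfl

end Shear

end MvPolynomial

/-- Let `Z/p` act on `F_p[x_1,…,x_m,y_1,…,y_m]` by `σ(x_i) = x_i`, `σ(y_i) = y_i + x_i`
(the `x`'s are the `Sum.inl` variables, the `y`'s the `Sum.inr` variables).  The image of
the ring of invariants under the quotient map setting each `x_i = 0` (identified with the
surjection onto `F_p[y_1,…,y_m]`) is exactly `F_p[y_1^p,…,y_m^p]`. -/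
theorem stmt2 (p m : ℕ) (hp : p.Prime) :
    {g : MvPolynomial (Fin m) (ZMod p) |
        ∃ f : MvPolynomial (Fin m ⊕ Fin m) (ZMod p),
          aeval (Sum.elim (fun i => (X (Sum.inl i) : MvPolynomial (Fin m ⊕ Fin m) (ZMod p)))
              (fun i => X (Sum.inr i) + X (Sum.inl i))) f = f ∧
          aeval (Sum.elim (fun _ => (0 : MvPolynomial (Fin m) (ZMod p)))
              (fun i => X i)) f = g} =
      ↑(Algebra.adjoin (ZMod p)
          (Set.range fun i : Fin m => (X i : MvPolynomial (Fin m) (ZMod p)) ^ p)) := by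
  have := Fact.mk hp
  ext g
  simp only [Set.mem_ofPred_eq, SetLike.mem_coe, Algebra.adjoin_range_eq_range_aeval,
    AlgHom.mem_range]
  constructor
  · rintro ⟨f, hf, rfl⟩
    exact exists_expand_eq_reduceInl_of_shear_eq p hf
  · rintro ⟨h, rfl⟩
    exact exists_shear_eq_and_reduceInl_eq_expand p h
end

section
/- Let p be a prime and V a finite-dimensional F_p[Z/p]-module which is a direct sum V = W ⊕ U with W a trivial module and U reduced. Then the image of the invariant ring S(V)^{Z/p} under the natural surjection S(V) → S(V_{Z/p}) equals the subalgebra S(W ⊕ Φ(U_{Z/p})), where Φ denotes the span of p-th powers. -/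
/-!
An invariant `f` maps to a polynomial whose partial derivatives in the `U_{Z/p}`-variables all
vanish. Indeed, reducedness gives `ker (σ - 1) ≤ range (σ - 1)`, so every coordinate functional
`φ` of `U_{Z/p}` factors as `φ ∘ mkQ = δ ∘ (σ - 1)` with `δ` a functional on `U`; the derivation
`D = ∑ⱼ δ(uⱼ) ∂/∂uⱼ` of `S(V)` then satisfies `π (D (σ f)) = π (D f) + ∂_φ (π f)`, which for
`σ f = f` says `∂_φ (π f) = 0`. In characteristic `p` this forces every monomial of `π f` to be a
`p`-th power in the `U_{Z/p}`-variables. Conversely `W` consists of invariants, and for a lift `u`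
of `x ∈ U_{Z/p}` the orbit product `∏_{i < p} σⁱ u` is an invariant mapping to `x ^ p`.
-/

open MvPolynomial

section LinearAlgebra

variable {K V : Type*} [Field K] [AddCommGroup V] [Module K V] (σ : V →ₗ[K] V)

theorem LinearMap.ker_sub_one_le_range_sub_one
    (hred : ¬ ∃ (W' U' : Submodule K V), IsCompl W' U' ∧ W' ≠ ⊥ ∧
        (∀ w ∈ W', σ w = w) ∧ (∀ u ∈ U', σ u ∈ U')) :
    LinearMap.ker (σ - 1) ≤ LinearMap.range (σ - 1) := by
  intro u hu
  by_contra hur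
  have hσu : σ u = u := by simpa [sub_eq_zero] using hu
  obtain ⟨U', hrange, hcompl⟩ :=
    (Submodule.disjoint_span_singleton.2 fun h => absurd h hur).exists_isCompl
  refine hred ⟨K ∙ u, U', hcompl.symm, ?_, ?_, ?_⟩
  · rw [ne_eq, Submodule.span_singleton_eq_bot]
    rintro rfl
    exact hur (Submodule.zero_mem _)
  · intro w hw
    obtain ⟨t, rfl⟩ := Submodule.mem_span_singleton.1 hw
    rw [map_smul, hσu]
  · intro x hx
    have hσx : σ x = x + (σ - 1) x := by simp
    exact hσx ▸ add_mem hx (hrange ⟨x, rfl⟩)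

theorem Submodule.mkQ_range_sub_one_pow_apply (n : ℕ) (x : V) :
    (LinearMap.range (σ - 1)).mkQ ((σ ^ n) x) = (LinearMap.range (σ - 1)).mkQ x := by
  rw [Submodule.mkQ_apply, Submodule.mkQ_apply, Submodule.Quotient.eq]
  exact ⟨(∑ i ∈ Finset.range n, σ ^ i) x, by rw [← Module.End.mul_apply, mul_geom_sum]; rfl⟩

theorem LinearMap.exists_dual_apply_eq_add
    (h : LinearMap.ker (σ - 1) ≤ LinearMap.range (σ - 1))
    (φ : Module.Dual K (V ⧸ LinearMap.range (σ - 1))) :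
    ∃ δ : Module.Dual K V, ∀ u, δ (σ u) = δ u + φ ((LinearMap.range (σ - 1)).mkQ u) := by
  have hφ : φ ∘ₗ (LinearMap.range (σ - 1)).mkQ ∈ (LinearMap.ker (σ - 1)).dualAnnihilator := by
    rw [Submodule.mem_dualAnnihilator]
    intro u hu
    rw [LinearMap.comp_apply, Submodule.mkQ_apply, (Submodule.Quotient.mk_eq_zero _).2 (h hu),
      map_zero]
  rw [← LinearMap.range_dualMap_eq_dualAnnihilator_ker] at hφ
  obtain ⟨δ, hδ⟩ := hφ
  refine ⟨δ, fun u => ?_⟩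
  rw [← sub_eq_iff_eq_add', ← map_sub, ← LinearMap.comp_apply φ, ← hδ]
  simp

end LinearAlgebra

namespace MvPolynomial

theorem map_derivation_algHom_eq_add {R ι S : Type*} [CommRing R] [CommRing S] [Algebra R S]
    (σ : MvPolynomial ι R →ₐ[R] MvPolynomial ι R)
    (π : MvPolynomial ι R →ₐ[R] S) (hπσ : ∀ f, π (σ f) = π f)
    (D : Derivation R (MvPolynomial ι R) (MvPolynomial ι R)) (E : Derivation R S S)
    (hX : ∀ i, π (D (σ (X i))) = π (D (X i)) + E (π (X i))) (f : MvPolynomial ι R) :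
    π (D (σ f)) = π (D f) + E (π f) := by
  induction f using MvPolynomial.induction_on with
  | C r => simp
  | add f g hf hg => simp only [map_add, hf, hg]; ring
  | mul_X g i hg =>
    simp only [map_mul, Derivation.leibniz, smul_eq_mul, map_add, hπσ, hg, hX]
    ring

variable {R τ : Type*} [CommRing R] [IsDomain R] (p : ℕ) [CharP R p]

theorem dvd_of_mem_support_of_pderiv_eq_zero_s4 {g : MvPolynomial τ R} {i : τ}
    (h : pderiv i g = 0) {m : τ →₀ ℕ} (hm : m ∈ g.support) : p ∣ m i := by
  rcases Nat.eq_zero_or_pos (m i) with hmi | hmi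
  · simp [hmi]
  have hcoeff := coeff_pderiv (i := i) g (m - Finsupp.single i 1)
  have hle : Finsupp.single i 1 ≤ m := Finsupp.single_le_iff.2 hmi
  rw [h, coeff_zero, tsub_add_cancel_of_le hle, Finsupp.tsub_apply, Finsupp.single_eq_same,
    ← Nat.cast_succ, Nat.succ_eq_add_one, Nat.sub_add_cancel hmi] at hcoeff
  rw [← CharP.cast_eq_zero_iff R]
  exact (mul_eq_zero.1 hcoeff.symm).resolve_left (mem_support_iff.1 hm)

theorem mem_adjoin_of_pderiv_inr_eq_zero {α β : Type*}
    {g : MvPolynomial (α ⊕ β) R} (h : ∀ k, pderiv (Sum.inr k) g = 0) :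
    g ∈ Algebra.adjoin R (Set.range (fun i => X (Sum.inl i)) ∪
      Set.range (fun k => X (Sum.inr k) ^ p)) := by
  rw [g.as_sum]
  refine Subalgebra.sum_mem _ fun m hm => ?_
  rw [monomial_eq, Finsupp.prod]
  refine Subalgebra.mul_mem _ (Subalgebra.algebraMap_mem _ _) (Subalgebra.prod_mem _ ?_)
  rintro (i | k) -
  · exact Subalgebra.pow_mem _
      (Algebra.subset_adjoin (Set.mem_union_left _ (Set.mem_range_self i))) _
  · obtain ⟨t, ht⟩ := dvd_of_mem_support_of_pderiv_eq_zero_s4 p (h k) hm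
    rw [ht, pow_mul]
    exact Subalgebra.pow_mem _
      (Algebra.subset_adjoin (Set.mem_union_right _ (Set.mem_range_self k))) _

end MvPolynomial

namespace CyclicInvariants

variable {K : Type*} [Field K] {α ι κ : Type*} {M : Type*} [AddCommGroup M] [Module K M]

noncomputable def linearForm (α : Type*) (b : Module.Basis ι K M) :
    M →ₗ[K] MvPolynomial (α ⊕ ι) K :=
  b.constr K fun j => X (Sum.inr j)

theorem linearForm_basis (b : Module.Basis ι K M) (j : ι) :
    linearForm α b (b j) = X (Sum.inr j) :=
  b.constr_basis K _ j

theorem linearForm_apply [Fintype ι] (b : Module.Basis ι K M) (x : M) :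
    linearForm α b x = ∑ j, b.repr x j • X (Sum.inr j) := by
  simp [linearForm, Module.Basis.constr_apply_fintype]

theorem linearForm_equivFun_symm [Fintype ι] (b : Module.Basis ι K M) (w : ι → K) :
    linearForm α b (b.equivFun.symm w) = ∑ j, w j • X (Sum.inr j) := by
  simp only [linearForm_apply, ← Module.Basis.equivFun_apply, LinearEquiv.apply_symm_apply]

theorem pderiv_linearForm [Fintype ι] [DecidableEq α] [DecidableEq ι]
    (b : Module.Basis ι K M) (k : ι) (x : M) :
    pderiv (Sum.inr k) (linearForm α b x) = C (b.coord k x) := by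
  simp [linearForm_apply, pderiv_X, Pi.single_apply, Module.Basis.coord_apply, smul_eq_C_mul]

variable {U : Type*} [AddCommGroup U] [Module K U] (σ : U →ₗ[K] U) (bU : Module.Basis ι K U)
  [Fintype κ] (bQ : Module.Basis κ K (U ⧸ LinearMap.range (σ - 1)))

noncomputable def coinvariantsAlgHom (α : Type*) :
    MvPolynomial (α ⊕ ι) K →ₐ[K] MvPolynomial (α ⊕ κ) K :=
  aeval (Sum.elim (fun i => X (Sum.inl i))
    fun j => ∑ k, bQ.repr ((LinearMap.range (σ - 1)).mkQ (bU j)) k • X (Sum.inr k))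

@[simp]
theorem coinvariantsAlgHom_X_inl (i : α) :
    coinvariantsAlgHom σ bU bQ α (X (Sum.inl i)) = X (Sum.inl i) := by
  simp [coinvariantsAlgHom]

theorem coinvariantsAlgHom_linearForm (x : U) :
    coinvariantsAlgHom σ bU bQ α (linearForm α bU x) =
      linearForm α bQ ((LinearMap.range (σ - 1)).mkQ x) := by
  have : (coinvariantsAlgHom σ bU bQ α).toLinearMap ∘ₗ linearForm α bU =
      linearForm α bQ ∘ₗ (LinearMap.range (σ - 1)).mkQ :=
    bU.ext fun j => by
      simp only [LinearMap.comp_apply, AlgHom.toLinearMap_apply, linearForm_basis]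
      simp [coinvariantsAlgHom, linearForm_apply]
  exact LinearMap.congr_fun this x

variable [Fintype ι]

noncomputable def actionAlgHom (α : Type*) :
    MvPolynomial (α ⊕ ι) K →ₐ[K] MvPolynomial (α ⊕ ι) K :=
  aeval (Sum.elim (fun i => X (Sum.inl i))
    fun j => ∑ k, bU.repr (σ (bU j)) k • X (Sum.inr k))

@[simp]
theorem actionAlgHom_X_inl (i : α) : actionAlgHom σ bU α (X (Sum.inl i)) = X (Sum.inl i) := by
  simp [actionAlgHom]

theorem actionAlgHom_linearForm (x : U) :
    actionAlgHom σ bU α (linearForm α bU x) = linearForm α bU (σ x) := by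
  have : (actionAlgHom σ bU α).toLinearMap ∘ₗ linearForm α bU = linearForm α bU ∘ₗ σ :=
    bU.ext fun j => by
      simp only [LinearMap.comp_apply, AlgHom.toLinearMap_apply, linearForm_basis]
      simp [actionAlgHom, linearForm_apply]
  exact LinearMap.congr_fun this x

theorem coinvariantsAlgHom_actionAlgHom (f : MvPolynomial (α ⊕ ι) K) :
    coinvariantsAlgHom σ bU bQ α (actionAlgHom σ bU α f) = coinvariantsAlgHom σ bU bQ α f := by
  suffices (coinvariantsAlgHom σ bU bQ α).comp (actionAlgHom σ bU α) =
      coinvariantsAlgHom σ bU bQ α from AlgHom.congr_fun this f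
  refine algHom_ext fun v => ?_
  rcases v with i | j
  · simp
  · rw [AlgHom.comp_apply, ← linearForm_basis bU j, actionAlgHom_linearForm,
      coinvariantsAlgHom_linearForm, coinvariantsAlgHom_linearForm]
    simpa using congrArg (linearForm α bQ) (Submodule.mkQ_range_sub_one_pow_apply σ 1 (bU j))

theorem exists_actionAlgHom_eq_self_coinvariantsAlgHom_eq_pow {n : ℕ} [NeZero n]
    (hσ : σ ^ n = 1) (w : κ → K) :
    ∃ f, actionAlgHom σ bU α f = f ∧
      coinvariantsAlgHom σ bU bQ α f = (∑ k, w k • X (Sum.inr k)) ^ n := by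
  obtain ⟨u, hu⟩ := (LinearMap.range (σ - 1)).mkQ_surjective (bQ.equivFun.symm w)
  refine ⟨∏ i : ZMod n, linearForm α bU ((σ ^ i.val) u), ?_, ?_⟩
  · rw [map_prod]
    refine Fintype.prod_equiv (Equiv.addRight 1) _ _ fun i => ?_
    rw [actionAlgHom_linearForm, ← Module.End.mul_apply, ← pow_succ', pow_eq_pow_mod _ hσ,
      Equiv.coe_addRight, ZMod.val_add, ZMod.val_one_eq_one_mod, Nat.add_mod_mod]
  · simp only [map_prod, coinvariantsAlgHom_linearForm, Submodule.mkQ_range_sub_one_pow_apply,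
      hu, linearForm_equivFun_symm, Finset.prod_const, Finset.card_univ, ZMod.card]

theorem pderiv_coinvariantsAlgHom_eq_zero [DecidableEq α] [DecidableEq κ]
    (hker : LinearMap.ker (σ - 1) ≤ LinearMap.range (σ - 1)) {f : MvPolynomial (α ⊕ ι) K}
    (hf : actionAlgHom σ bU α f = f) (k : κ) :
    pderiv (Sum.inr k) (coinvariantsAlgHom σ bU bQ α f) = 0 := by
  obtain ⟨δ, hδ⟩ := σ.exists_dual_apply_eq_add hker (bQ.coord k)
  let D : Derivation K (MvPolynomial (α ⊕ ι) K) (MvPolynomial (α ⊕ ι) K) :=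
    mkDerivation K (Sum.elim 0 fun j => C (δ (bU j)))
  have hD (x : U) : D (linearForm α bU x) = C (δ x) := by
    have : D.toLinearMap ∘ₗ linearForm α bU = Algebra.linearMap K _ ∘ₗ δ :=
      bU.ext fun j => by simp [D, linearForm_basis, mkDerivation_X]
    exact LinearMap.congr_fun this x
  have key := map_derivation_algHom_eq_add _ _ (coinvariantsAlgHom_actionAlgHom σ bU bQ) D
    (pderiv (Sum.inr k)) ?_ f
  · rwa [hf, left_eq_add] at key
  rintro (i | j)
  · simp [D, mkDerivation_X, pderiv_X]
  · rw [← linearForm_basis bU j, actionAlgHom_linearForm, coinvariantsAlgHom_linearForm, hD, hD,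
      pderiv_linearForm, hδ, map_add]
    simp

end CyclicInvariants

open CyclicInvariants in
theorem stmt4_general (p : ℕ) [Fact p.Prime] (a b c : ℕ)
    (U : Type) [AddCommGroup U] [Module (ZMod p) U]
    (σU : U →ₗ[ZMod p] U) (hσp : σU ^ p = 1)
    (hred : ¬ ∃ (W' U' : Submodule (ZMod p) U), IsCompl W' U' ∧ W' ≠ ⊥ ∧
        (∀ w ∈ W', σU w = w) ∧ (∀ u ∈ U', σU u ∈ U'))
    (bU : Module.Basis (Fin b) (ZMod p) U)
    (bQ : Module.Basis (Fin c) (ZMod p) (U ⧸ LinearMap.range (σU - 1))) :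
    {g : MvPolynomial (Fin a ⊕ Fin c) (ZMod p) |
        ∃ f : MvPolynomial (Fin a ⊕ Fin b) (ZMod p),
          aeval (Sum.elim
              (fun i => (X (Sum.inl i) : MvPolynomial (Fin a ⊕ Fin b) (ZMod p)))
              (fun j => ∑ k, bU.repr (σU (bU j)) k • X (Sum.inr k))) f = f ∧
          aeval (Sum.elim
              (fun i => (X (Sum.inl i) : MvPolynomial (Fin a ⊕ Fin c) (ZMod p)))
              (fun j => ∑ k, bQ.repr ((LinearMap.range (σU - 1)).mkQ (bU j)) k •
                  X (Sum.inr k))) f = g} =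
      ↑(Algebra.adjoin (ZMod p)
          ((Set.range fun i : Fin a =>
              (X (Sum.inl i) : MvPolynomial (Fin a ⊕ Fin c) (ZMod p))) ∪
            {f | ∃ w : Fin c → ZMod p,
                f = (∑ k, w k • (X (Sum.inr k) :
                    MvPolynomial (Fin a ⊕ Fin c) (ZMod p))) ^ p})) := by
  change (((AlgHom.equalizer (actionAlgHom σU bU (Fin a)) (AlgHom.id _ _)).map
    (coinvariantsAlgHom σU bU bQ (Fin a)) : Subalgebra _ _) :
      Set (MvPolynomial (Fin a ⊕ Fin c) (ZMod p))) = _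
  rw [SetLike.coe_set_eq]
  refine le_antisymm ?_ (Algebra.adjoin_le ?_)
  · rintro _ ⟨f, hf, rfl⟩
    refine Algebra.adjoin_mono (Set.union_subset_union_right _ ?_)
      (mem_adjoin_of_pderiv_inr_eq_zero p
        (pderiv_coinvariantsAlgHom_eq_zero σU bU bQ (σU.ker_sub_one_le_range_sub_one hred) hf))
    rintro _ ⟨k, rfl⟩
    exact ⟨Pi.single k 1, by simp [Pi.single_apply]⟩
  · rintro _ (⟨i, rfl⟩ | ⟨w, rfl⟩)
    · exact ⟨X (Sum.inl i), actionAlgHom_X_inl σU bU i, coinvariantsAlgHom_X_inl σU bU bQ i⟩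
    · exact exists_actionAlgHom_eq_self_coinvariantsAlgHom_eq_pow σU bU bQ hσp w

/-- Theorem (invariants): let `V = W ⊕ U` be a finite-dimensional `F_p[Z/p]`-module with
`W` trivial (of rank `a`) and `U` reduced (no trivial direct summand), given by
`σU : U → U` with `σU^p = 1`.  Identify `S(V)` with the polynomial ring on variables
`Sum.inl i` (a basis of `W`) and `Sum.inr j` (the basis `bU` of `U`), with the induced
`Z/p`-action, and identify `S(V_{Z/p}) = S(W ⊕ U_{Z/p})` with the polynomial ring on
variables `Sum.inl i` and `Sum.inr k` (the basis `bQ` of `U_{Z/p} = U/rad(U)`), the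
surjection `S(V) → S(V_{Z/p})` being induced by the quotient map `U → U_{Z/p}`.
Then the image of the invariant ring `S(V)^{Z/p}` in `S(V_{Z/p})` is exactly
`S(W ⊕ Φ(U_{Z/p}))`, the subalgebra generated by `W` and the `p`-th powers of the
elements of `U_{Z/p}`. -/
theorem stmt4 (p : ℕ) [Fact p.Prime] (a b c : ℕ)
    (U : Type) [AddCommGroup U] [Module (ZMod p) U] [FiniteDimensional (ZMod p) U]
    (σU : U →ₗ[ZMod p] U) (hσp : σU ^ p = 1)
    (hred : ¬ ∃ (W' U' : Submodule (ZMod p) U), IsCompl W' U' ∧ W' ≠ ⊥ ∧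
        (∀ w ∈ W', σU w = w) ∧ (∀ u ∈ U', σU u ∈ U'))
    (bU : Module.Basis (Fin b) (ZMod p) U)
    (bQ : Module.Basis (Fin c) (ZMod p) (U ⧸ LinearMap.range (σU - 1))) :
    {g : MvPolynomial (Fin a ⊕ Fin c) (ZMod p) |
        ∃ f : MvPolynomial (Fin a ⊕ Fin b) (ZMod p),
          aeval (Sum.elim
              (fun i => (X (Sum.inl i) : MvPolynomial (Fin a ⊕ Fin b) (ZMod p)))
              (fun j => ∑ k, bU.repr (σU (bU j)) k • X (Sum.inr k))) f = f ∧
          aeval (Sum.elim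
              (fun i => (X (Sum.inl i) : MvPolynomial (Fin a ⊕ Fin c) (ZMod p)))
              (fun j => ∑ k, bQ.repr ((LinearMap.range (σU - 1)).mkQ (bU j)) k •
                  X (Sum.inr k))) f = g} =
      ↑(Algebra.adjoin (ZMod p)
          ((Set.range fun i : Fin a =>
              (X (Sum.inl i) : MvPolynomial (Fin a ⊕ Fin c) (ZMod p))) ∪
            {f | ∃ w : Fin c → ZMod p,
                f = (∑ k, w k • (X (Sum.inr k) :
                    MvPolynomial (Fin a ⊕ Fin c) (ZMod p))) ^ p})) :=
  stmt4_general p a b c U σU hσp hred bU bQ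
end

section
/- Let p be a prime and V a finite-dimensional F_p[Z/p]-module filtered by submodules V(0) ⊆ V(1) ⊆ ... ⊆ V(n) = V such that rad(V) ⊆ V(0). Then there exists a direct sum decomposition V = W ⊕ U of filtered F_p[Z/p]-modules (i.e. V(k) = (W ∩ V(k)) ⊕ (U ∩ V(k)) for all k) with W a trivial module and U reduced. -/
/-!
Let `K` and `R` be the fixed points and the image of `σ - 1`. Take for `W` a complement of
`K ⊓ R` in `K`; it meets `R` trivially, and since `R ≤ V(0)` a complement `U ⊇ R` of `W` can be
grown step by step along the filtration so that it splits every `V(k)`. As `U ⊇ R`, it is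
`σ`-stable, and by the modular law `K ⊓ U = K ⊓ R`. If `U = W' ⊕ U'` with `W'` trivial and `U'`
stable, then `R = (σ - 1) U = (σ - 1) U' ≤ U'`, so `W' ≤ K ⊓ U ≤ R ≤ U'` forces `W' = 0`.
-/

open Submodule LinearMap

section FilteredComplement

variable {α : Type*} [Lattice α] [BoundedOrder α] [IsModularLattice α] [ComplementedLattice α]

theorem exists_le_disjoint_inf_sup_eq {A B Y : α} (hBY : B ≤ Y) (hAB : Disjoint A B) :
    ∃ B', B ≤ B' ∧ B' ≤ Y ∧ Disjoint A B' ∧ A ⊓ Y ⊔ B' = Y := by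
  obtain ⟨D, hD, hsup⟩ :=
    IsModularLattice.exists_disjoint_and_sup_eq (sup_le (inf_le_right : A ⊓ Y ≤ Y) hBY)
  have hB'Y : B ⊔ D ≤ Y := by rw [← hsup, sup_assoc]; exact le_sup_right
  have hdisj : Disjoint (A ⊓ Y) (B ⊔ D) :=
    (hAB.mono_left inf_le_left).disjoint_sup_right_of_disjoint_sup_left hD
  refine ⟨B ⊔ D, le_sup_left, hB'Y, ?_, by rw [← sup_assoc, hsup]⟩
  rw [← inf_eq_right.mpr hB'Y]
  exact disjoint_assoc.mp hdisj

theorem exists_le_disjoint_splits_upTo {G : ℕ → α} (hG : Monotone G) {A C : α} (hC : C ≤ G 0)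
    (hAC : Disjoint A C) (m : ℕ) :
    ∃ B, C ≤ B ∧ B ≤ G m ∧ Disjoint A B ∧ ∀ k ≤ m, G k ≤ A ⊓ G k ⊔ B ⊓ G k := by
  induction m with
  | zero =>
    obtain ⟨B, hCB, hBG, hAB, hsup⟩ := exists_le_disjoint_inf_sup_eq hC hAC
    refine ⟨B, hCB, hBG, hAB, fun k hk => ?_⟩
    rw [Nat.le_zero.mp hk, inf_eq_left.mpr hBG, hsup]
  | succ m ih =>
    obtain ⟨B, hCB, hBG, hAB, hsplit⟩ := ih
    obtain ⟨B', hBB', hB'G, hAB', hsup⟩ :=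
      exists_le_disjoint_inf_sup_eq (hBG.trans (hG m.le_succ)) hAB
    refine ⟨B', hCB.trans hBB', hB'G, hAB', fun k hk => ?_⟩
    rcases Nat.of_le_succ hk with hk | rfl
    · exact (hsplit k hk).trans (sup_le_sup_left (inf_le_inf_right _ hBB') _)
    · rw [inf_eq_left.mpr hB'G, hsup]

theorem exists_isCompl_splits {G : ℕ → α} (hG : Monotone G) {n : ℕ} (hn : G n = ⊤) {A C : α}
    (hC : C ≤ G 0) (hAC : Disjoint A C) :
    ∃ B, C ≤ B ∧ IsCompl A B ∧ ∀ k, G k = A ⊓ G k ⊔ B ⊓ G k := by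
  obtain ⟨B, hCB, -, hAB, hsplit⟩ := exists_le_disjoint_splits_upTo hG hC hAC n
  have hsup : A ⊔ B = ⊤ := by
    simpa only [hn, inf_top_eq, top_le_iff, eq_comm] using hsplit n le_rfl
  refine ⟨B, hCB, ⟨hAB, codisjoint_iff.mpr hsup⟩, fun k => ?_⟩
  refine le_antisymm ?_ (sup_le inf_le_right inf_le_right)
  rcases le_total k n with hk | hk
  · exact hsplit k hk
  · rw [top_unique (hn.symm.trans_le (hG hk)), inf_top_eq, inf_top_eq, hsup]

end FilteredComplement

section SubOne

variable {R V : Type*} [Ring R] [AddCommGroup V] [Module R V] (σ : V →ₗ[R] V)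

theorem mem_ker_sub_one_iff {v : V} : v ∈ ker (σ - 1) ↔ σ v = v := by
  rw [mem_ker, LinearMap.sub_apply, Module.End.one_apply, sub_eq_zero]

theorem le_ker_sub_one_iff {W : Submodule R V} : W ≤ ker (σ - 1) ↔ ∀ w ∈ W, σ w = w := by
  simp only [SetLike.le_def, mem_ker_sub_one_iff]

theorem map_sub_one_le {U : Submodule R V} (hU : ∀ u ∈ U, σ u ∈ U) : U.map (σ - 1) ≤ U := by
  rintro _ ⟨u, hu, rfl⟩
  exact sub_mem (hU u hu) hu

theorem apply_mem_of_range_sub_one_le {U : Submodule R V} (hU : range (σ - 1) ≤ U) :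
    ∀ u ∈ U, σ u ∈ U := fun u hu => by
  simpa using add_mem hu (hU (mem_range_self (σ - 1) u))

theorem map_sup_of_le_ker {M : Type*} [AddCommGroup M] [Module R M] (f : V →ₗ[R] M)
    {A B : Submodule R V} (hA : A ≤ ker f) : (A ⊔ B).map f = B.map f := by
  rw [Submodule.map_sup, le_ker_iff_map.mp hA, bot_sup_eq]

variable {σ}

theorem eq_bot_of_le_ker_sub_one_of_sup_eq {W U W' U' : Submodule R V} (hWU : W ⊔ U = ⊤)
    (hW : W ≤ ker (σ - 1)) (hKU : ker (σ - 1) ⊓ U ≤ range (σ - 1)) (hW'U' : Disjoint W' U')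
    (hsum : W' ⊔ U' = U) (hW' : W' ≤ ker (σ - 1)) (hU' : ∀ u ∈ U', σ u ∈ U') : W' = ⊥ := by
  have hrange : range (σ - 1) ≤ U' := calc
    range (σ - 1) = (W ⊔ (W' ⊔ U')).map (σ - 1) := by rw [hsum, hWU, range_eq_map]
    _ = U'.map (σ - 1) := by rw [map_sup_of_le_ker _ hW, map_sup_of_le_ker _ hW']
    _ ≤ U' := map_sub_one_le σ hU'
  exact hW'U'.eq_bot_of_le <| (le_inf hW' (hsum ▸ le_sup_left)).trans (hKU.trans hrange)

end SubOne

theorem stmt5_general (p : ℕ) [Fact p.Prime] (V : Type) [AddCommGroup V] [Module (ZMod p) V]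
    (σ : V →ₗ[ZMod p] V) (n : ℕ) (F : ℕ → Submodule (ZMod p) V) (hmono : Monotone F)
    (htop : F n = ⊤) (hrad : LinearMap.range (σ - 1) ≤ F 0) :
    ∃ W U : Submodule (ZMod p) V, IsCompl W U ∧
      (∀ w ∈ W, σ w = w) ∧ (∀ u ∈ U, σ u ∈ U) ∧
      (¬ ∃ (W' U' : Submodule (ZMod p) V), W' ≤ U ∧ U' ≤ U ∧ W' ⊓ U' = ⊥ ∧ W' ⊔ U' = U ∧
          W' ≠ ⊥ ∧ (∀ w ∈ W', σ w = w) ∧ (∀ u ∈ U', σ u ∈ U')) ∧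
      (∀ k, F k = (W ⊓ F k) ⊔ (U ⊓ F k)) := by
  set K := ker (σ - 1)
  set R := range (σ - 1)
  obtain ⟨W, hKRW, hKRW_sup⟩ :=
    IsModularLattice.exists_disjoint_and_sup_eq (inf_le_left : K ⊓ R ≤ K)
  have hWK : W ≤ K := hKRW_sup ▸ le_sup_right
  have hWR : Disjoint W R := by
    rw [← inf_eq_left.mpr hWK]
    exact disjoint_assoc.mpr hKRW.symm
  obtain ⟨U, hRU, hWU, hsplit⟩ := exists_isCompl_splits hmono htop hrad hWR
  have hKU : K ⊓ U ≤ R := by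
    rw [← hKRW_sup, sup_inf_assoc_of_le _ (inf_le_right.trans hRU), hWU.inf_eq_bot, sup_bot_eq]
    exact inf_le_right
  refine ⟨W, U, hWU, (le_ker_sub_one_iff σ).mp hWK, apply_mem_of_range_sub_one_le σ hRU, ?_,
    hsplit⟩
  rintro ⟨W', U', -, -, hW'U', hsum, hne, hW', hU'⟩
  exact hne <| eq_bot_of_le_ker_sub_one_of_sup_eq hWU.sup_eq_top hWK hKU
    (disjoint_iff.mpr hW'U') hsum ((le_ker_sub_one_iff σ).mpr hW') hU'

/-- If a finite-dimensional `F_p[Z/p]`-module `V` (given by `σ` with `σ^p = 1`) carries a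
filtration `V(0) ⊆ V(1) ⊆ … ⊆ V(n) = V` by submodules with `rad(V) = range (σ - 1) ⊆ V(0)`,
then there is a direct sum decomposition `V = W ⊕ U` of filtered `F_p[Z/p]`-modules
(`V(k) = (W ∩ V(k)) ⊕ (U ∩ V(k))` for all `k`) with `W` trivial and `U` reduced. -/
theorem stmt5 (p : ℕ) [Fact p.Prime] (V : Type) [AddCommGroup V] [Module (ZMod p) V]
    [FiniteDimensional (ZMod p) V] (σ : V →ₗ[ZMod p] V) (hσ : σ ^ p = 1)
    (n : ℕ) (F : ℕ → Submodule (ZMod p) V) (hmono : Monotone F)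
    (hinv : ∀ k, ∀ v ∈ F k, σ v ∈ F k) (htop : F n = ⊤)
    (hrad : LinearMap.range (σ - 1) ≤ F 0) :
    ∃ W U : Submodule (ZMod p) V, IsCompl W U ∧
      (∀ w ∈ W, σ w = w) ∧ (∀ u ∈ U, σ u ∈ U) ∧
      (¬ ∃ (W' U' : Submodule (ZMod p) V), W' ≤ U ∧ U' ≤ U ∧ W' ⊓ U' = ⊥ ∧ W' ⊔ U' = U ∧
          W' ≠ ⊥ ∧ (∀ w ∈ W', σ w = w) ∧ (∀ u ∈ U', σ u ∈ U')) ∧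
      (∀ k, F k = (W ⊓ F k) ⊔ (U ⊓ F k)) :=
  stmt5_general p V σ n F hmono htop hrad
end

section
/- Let p be a prime, V a finite-dimensional F_p-vector space, and F a filtration V(0) ⊆ V(1) ⊆ ... ⊆ V(n) = V. Define e(F) = Σ_k c_k (2p^k − 1), where c_k = dim V(k)/V(k−1). If ρ is a faithful complex representation of the elementary abelian p-group C dual to V, given by distinct characters v_1,...,v_m spanning V with multiplicities n_1,...,n_m, and F_ρ is the filtration with V(i) the span of those v_j with p^{i+1} not dividing n_j, then e(F_ρ) ≤ 2n − c, where n = n_1 + ... + n_m and c = dim V. -/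
/-!
Write `e j` for the `p`-adic valuation of `n_j`. Then `V(k)` is spanned by the `v_j` with
`e j ≤ k`, so `c_k ≤ #{j | e j = k}`, whence `∑ c_k p^k ≤ ∑_j p^(e j) ≤ n`. As `∑ c_k = c`,
this gives `e(F_ρ) = 2 ∑ c_k p^k - c ≤ 2n - c`.
-/

open Module Submodule Finset

section SublevelSpan

variable {K V ι : Type*} [DivisionRing K] [AddCommGroup V] [Module K V]

variable (K) in
/-- With `e j = v_p(n_j)`, the paper's `V(k)` is `sublevelSpan K v e (k + 1)`. -/
noncomputable def sublevelSpan (v : ι → V) (e : ι → ℕ) (k : ℕ) : Submodule K V :=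
  span K (v '' {j | e j < k})

variable (v : ι → V) (e : ι → ℕ)

theorem sublevelSpan_zero : sublevelSpan K v e 0 = ⊥ := by
  simp [sublevelSpan]

theorem sublevelSpan_eq_top {N : ℕ} (hspan : span K (Set.range v) = ⊤) (he : ∀ j, e j < N) :
    sublevelSpan K v e N = ⊤ := by
  rw [sublevelSpan, ← hspan, ← Set.image_univ]
  congr
  exact Set.eq_univ_of_forall he

theorem sublevelSpan_succ (k : ℕ) :
    sublevelSpan K v e (k + 1) = sublevelSpan K v e k ⊔ span K (v '' {j | e j = k}) := by
  rw [sublevelSpan, sublevelSpan, ← span_union, ← Set.image_union]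
  congr
  ext j
  exact Nat.lt_succ_iff_lt_or_eq

variable [Finite ι]

instance (k : ℕ) : FiniteDimensional K (sublevelSpan K v e k) :=
  FiniteDimensional.span_of_finite K ((Set.toFinite _).image v)

theorem finrank_sublevelSpan_mono : Monotone fun k ↦ finrank K (sublevelSpan K v e k) :=
  fun _ _ hab ↦ Submodule.finrank_mono <|
    span_mono <| Set.image_mono fun _ hj ↦ lt_of_lt_of_le hj hab

variable [Fintype ι]

theorem finrank_sublevelSpan_succ_le (k : ℕ) :
    finrank K (sublevelSpan K v e (k + 1)) ≤ finrank K (sublevelSpan K v e k) + #{j | e j = k} := by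
  classical
  have hlevel : v '' {j | e j = k} = ↑(({j | e j = k} : Finset ι).image v) := by simp
  rw [sublevelSpan_succ, hlevel]
  refine (finrank_add_le_finrank_add_finrank _ _).trans (Nat.add_le_add_left ?_ _)
  exact (finrank_span_finset_le_card _).trans card_image_le

theorem sum_finrank_sublevelSpan_sub_mul_le {N : ℕ} (w : ℕ → ℕ) (he : ∀ j, e j < N) :
    ∑ k ∈ range N, (finrank K (sublevelSpan K v e (k + 1)) - finrank K (sublevelSpan K v e k)) * w k
      ≤ ∑ j, w (e j) :=
  calc _ ≤ ∑ k ∈ range N, #{j | e j = k} * w k := by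
        gcongr with k
        have := finrank_sublevelSpan_succ_le (K := K) v e k
        omega
    _ = ∑ k ∈ range N, ∑ j with e j = k, w (e j) := by
        refine sum_congr rfl fun k _ ↦ ?_
        rw [sum_congr rfl fun j hj ↦ congrArg w (mem_filter.1 hj).2, sum_const, smul_eq_mul]
    _ = ∑ j, w (e j) := sum_fiberwise_of_maps_to (fun j _ ↦ mem_range.2 (he j)) _

end SublevelSpan

theorem sum_mul_two_mul_sub_one_add_sum {α : Type*} (s : Finset α) (a w : α → ℕ)
    (hw : ∀ k ∈ s, 0 < w k) :
    ∑ k ∈ s, a k * (2 * w k - 1) + ∑ k ∈ s, a k = 2 * ∑ k ∈ s, a k * w k := by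
  rw [← sum_add_distrib, mul_sum]
  refine sum_congr rfl fun k hk ↦ ?_
  have := hw k hk
  rw [← Nat.mul_add_one, Nat.sub_add_cancel (by omega)]
  ring

theorem stmt6_general (p : ℕ) [Fact p.Prime] (V : Type) [AddCommGroup V] [Module (ZMod p) V]
    (m : ℕ) (v : Fin m → V)
    (hspan : Submodule.span (ZMod p) (Set.range v) = ⊤)
    (nmul : Fin m → ℕ) (hpos : ∀ j, 0 < nmul j)
    (B : ℕ) (hB : ∀ j, nmul j < p ^ (B + 1))
    (d : ℕ → ℕ)
    (hd : ∀ i, d i = Module.finrank (ZMod p)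
        ↥(Submodule.span (ZMod p) {x | ∃ j, ¬ ((p : ℕ) ^ (i + 1) ∣ nmul j) ∧ x = v j})) :
    (∑ k ∈ Finset.range (B + 1),
        (d k - (if k = 0 then 0 else d (k - 1))) * (2 * p ^ k - 1)) ≤
      2 * (∑ j, nmul j) - Module.finrank (ZMod p) V := by
  have hp : p.Prime := Fact.out
  set e : Fin m → ℕ := fun j ↦ (nmul j).factorization p
  have hdS (k : ℕ) : d k = finrank (ZMod p) (sublevelSpan (ZMod p) v e (k + 1)) := by
    have hset : {x | ∃ j, ¬ p ^ (k + 1) ∣ nmul j ∧ x = v j} = v '' {j | e j < k + 1} := by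
      ext x
      simp [e, hp.pow_dvd_iff_le_factorization (hpos _).ne', eq_comm]
    rw [hd, hset, sublevelSpan]
  have hterm (k : ℕ) : d k - (if k = 0 then 0 else d (k - 1)) =
      finrank (ZMod p) (sublevelSpan (ZMod p) v e (k + 1)) -
        finrank (ZMod p) (sublevelSpan (ZMod p) v e k) := by
    rcases k with _ | k
    · rw [if_pos rfl, hdS, sublevelSpan_zero, finrank_bot]
    · rw [if_neg k.succ_ne_zero, hdS, hdS, Nat.add_sub_cancel]
  have he (j) : e j < B + 1 :=
    (Nat.pow_lt_pow_iff_right hp.one_lt).1 ((Nat.ordProj_le p (hpos j).ne').trans_lt (hB j))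
  have hsum : ∑ k ∈ range (B + 1), (finrank (ZMod p) (sublevelSpan (ZMod p) v e (k + 1)) -
      finrank (ZMod p) (sublevelSpan (ZMod p) v e k)) = finrank (ZMod p) V := by
    rw [sum_range_tsub (finrank_sublevelSpan_mono v e), sublevelSpan_eq_top v e hspan he,
      sublevelSpan_zero, finrank_bot, finrank_top, Nat.sub_zero]
  simp only [hterm]
  refine Nat.le_sub_of_add_le ?_
  rw [← hsum, sum_mul_two_mul_sub_one_add_sum _ _ _ fun k _ ↦ pow_pos hp.pos k]
  gcongr
  exact (sum_finrank_sublevelSpan_sub_mul_le v e _ he).trans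
    (sum_le_sum fun j _ ↦ Nat.ordProj_le p (hpos j).ne')

/-- Let `C` be an elementary abelian `p`-group of rank `c` and `V` its `F_p`-vector space
of characters (an abstract `F_p`-space of dimension `c = finrank V`).  Let `ρ` be a
faithful complex representation of `C` given by distinct characters `v_1,…,v_m ∈ V`
spanning `V`, with multiplicities `n_1,…,n_m ≥ 1`, of total dimension `n = Σ n_j`.
Let `F_ρ` be the filtration of `V` with `V(i)` the span of those `v_j` with
`p^{i+1} ∤ n_j` (the filtration is exhausted by stage `B` whenever `n_j < p^{B+1}` for
all `j`).  Then `e(F_ρ) = Σ_k c_k (2p^k - 1) ≤ 2n - c`, where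
`c_k = dim V(k)/V(k-1)`. -/
theorem stmt6 (p : ℕ) [Fact p.Prime] (V : Type) [AddCommGroup V] [Module (ZMod p) V]
    [FiniteDimensional (ZMod p) V]
    (m : ℕ) (v : Fin m → V) (hinj : Function.Injective v)
    (hspan : Submodule.span (ZMod p) (Set.range v) = ⊤)
    (nmul : Fin m → ℕ) (hpos : ∀ j, 0 < nmul j)
    (B : ℕ) (hB : ∀ j, nmul j < p ^ (B + 1))
    (d : ℕ → ℕ)
    (hd : ∀ i, d i = Module.finrank (ZMod p)
        ↥(Submodule.span (ZMod p) {x | ∃ j, ¬ ((p : ℕ) ^ (i + 1) ∣ nmul j) ∧ x = v j})) :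
    (∑ k ∈ Finset.range (B + 1),
        (d k - (if k = 0 then 0 else d (k - 1))) * (2 * p ^ k - 1)) ≤
      2 * (∑ j, nmul j) - Module.finrank (ZMod p) V :=
  stmt6_general p V m v hspan nmul hpos B hB d hd
end

section
/- Let p be a prime, V a finite-dimensional F_p-vector space, and ρ a sum of one-dimensional classes given by distinct nonzero elements v_1,...,v_m ∈ V with multiplicities n_1,...,n_m. In the polynomial ring S(V), the total Chern class ∏_{j=1}^m (1 + v_j)^{n_j} lies in the subalgebra S(V(0) + Φ(V(1)) + Φ²(V(2)) + ... + Φ^k(V(k))), where V(i) is the span of those v_j such that p^{i+1} does not divide n_j and Φ^i(W) denotes the span of p^i-th powers of elements of W. -/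
open MvPolynomial

/-!
Since `(1 + u) ^ (p * k) = (1 + u ^ p) ^ k` in characteristic `p`, peeling off factors of `p`
from `n` turns `(1 + v) ^ n` into `(1 + v ^ p ^ t) ^ n'` with `p ∤ n'`, where `t` is the
`p`-adic valuation of `n`; that power of `v` lies in `Φ^t(V(t))`.
-/

theorem Subalgebra.one_add_pow_mem_of_pow_prime_pow_mem {R A : Type*} [CommSemiring R]
    [CommSemiring A] [Algebra R A] {p : ℕ} [hp : Fact p.Prime] [CharP A p]
    (S : Subalgebra R A) (n : ℕ) (u : A) (hu : ∀ t : ℕ, ¬ p ^ (t + 1) ∣ n → u ^ p ^ t ∈ S) :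
    (1 + u) ^ n ∈ S := by
  induction n using Nat.strong_induction_on generalizing u with
  | _ n ih =>
    by_cases hpn : p ∣ n
    · obtain ⟨k, rfl⟩ := hpn
      rcases Nat.eq_zero_or_pos k with rfl | hk
      · simp
      have hfrob : (1 + u) ^ (p * k) = (1 + u ^ p) ^ k := by
        rw [pow_mul, add_pow_char, one_pow]
      rw [hfrob]
      refine ih k (lt_mul_left hk hp.out.one_lt) (u ^ p) fun t ht => ?_
      have hdiv : ¬ p ^ (t + 1 + 1) ∣ p * k := by
        rwa [pow_succ', Nat.mul_dvd_mul_iff_left hp.out.pos]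
      simpa [← pow_mul, ← pow_succ'] using hu (t + 1) hdiv
    · exact pow_mem (add_mem S.one_mem (by simpa using hu 0 (by simpa using hpn))) n

theorem stmt7_general (p : ℕ) (hp : p.Prime) (c m : ℕ)
    (v : Fin m → MvPolynomial (Fin c) (ZMod p))
    (nmul : Fin m → ℕ) :
    (∏ j, (1 + v j) ^ nmul j) ∈
      Algebra.adjoin (ZMod p)
        (⋃ i : ℕ, {f | ∃ w ∈ Submodule.span (ZMod p)
            {x | ∃ j, ¬ ((p : ℕ) ^ (i + 1) ∣ nmul j) ∧ x = v j}, f = w ^ p ^ i}) := by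
  have : Fact p.Prime := ⟨hp⟩
  refine Subalgebra.prod_mem _ fun j _ =>
    Subalgebra.one_add_pow_mem_of_pow_prime_pow_mem _ _ _ fun t ht => ?_
  exact Algebra.subset_adjoin <|
    Set.mem_iUnion.2 ⟨t, v j, Submodule.subset_span ⟨j, ht, rfl⟩, rfl⟩

/-- Let `V` be a finite-dimensional `F_p`-vector space, realized as the span of the
degree-one variables in the symmetric algebra `S(V) = F_p[X_1,…,X_c]`.  Let
`v_1,…,v_m ∈ V` be distinct nonzero elements with multiplicities `n_1,…,n_m ≥ 1`.
Then the total Chern class `∏_j (1 + v_j)^{n_j}` lies in the subalgebra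
`S(V(0) + Φ(V(1)) + Φ²(V(2)) + ⋯)`, where `V(i)` is the span of those `v_j` with
`p^{i+1} ∤ n_j` and `Φ^i(W)` is the span of `p^i`-th powers of elements of `W`
(for `i` beyond the point where the filtration reaches `V`, the extra terms
`Φ^i(V)` generate nothing new). -/
theorem stmt7 (p : ℕ) (hp : p.Prime) (c m : ℕ)
    (v : Fin m → MvPolynomial (Fin c) (ZMod p))
    (hlin : ∀ j, v j ∈ Submodule.span (ZMod p)
        (Set.range (X : Fin c → MvPolynomial (Fin c) (ZMod p))))
    (hinj : Function.Injective v) (hne : ∀ j, v j ≠ 0)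
    (nmul : Fin m → ℕ) (hpos : ∀ j, 0 < nmul j) :
    (∏ j, (1 + v j) ^ nmul j) ∈
      Algebra.adjoin (ZMod p)
        (⋃ i : ℕ, {f | ∃ w ∈ Submodule.span (ZMod p)
            {x | ∃ j, ¬ ((p : ℕ) ^ (i + 1) ∣ nmul j) ∧ x = v j}, f = w ^ p ^ i}) :=
  stmt7_general p hp c m v nmul
end

section
/- Let p be a prime and let Z/p act on the polynomial ring F_p[x_1,...,x_t, Y_1,...,Y_t] where σ(x_j) = x_j and σ fixes the span of {x_1,...,x_t} and acts on Y_j (where Y_j stands for y_j^{p^{k_j}} with σ(y_j) = y_j + x_j extended multiplicatively, so σ(Y_j) = (y_j + x_j)^{p^{k_j}} = Y_j + x_j^{p^{k_j}}). Then the image of the invariant subring F_p[x_1,...,x_t, Y_1,...,Y_t]^{Z/p} under setting all x_j = 0 is contained in F_p[Y_1^p, ..., Y_t^p]. -/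
/-!
Specialise an invariant `f` along `x_j ↦ T` and `x_i ↦ 0` for `i ≠ j`, getting `F ∈ 𝔽_p[Y][T]`
whose constant coefficient is the image `g` of `f`. Invariance becomes
`F(T, Y + T^q e_j) = F(T, Y)` with `q = p^{k_j} ≥ 1`. In the `T^q`-coefficient of the left side
only the coefficients `F_0` and `F_q` contribute, as `F_0(Y + T^q e_j) ≡ F_0 + T^q ∂_j F_0` and
`F_n(Y + T^q e_j) ≡ F_n` modulo `T^q`; hence `∂g/∂Y_j = 0` for every `j`. In characteristic `p`
this forces every exponent of `g` to be divisible by `p`.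
-/

open MvPolynomial
open scoped Polynomial

namespace MvPolynomial

section Shift

variable {σ A : Type*} [CommSemiring A] [DecidableEq σ]

noncomputable def shiftByPow (j : σ) (q : ℕ) : MvPolynomial σ A →ₐ[A] (MvPolynomial σ A)[X] :=
  aeval fun i => Polynomial.C (X i) + if i = j then Polynomial.X ^ q else 0

theorem shiftByPow_X (j i : σ) (q : ℕ) :
    shiftByPow j q (X i : MvPolynomial σ A) =
      Polynomial.C (X i) + if i = j then Polynomial.X ^ q else 0 :=
  aeval_X _ _

theorem coeff_shiftByPow_of_lt (j : σ) {q r : ℕ} (hr : r < q) (c : MvPolynomial σ A) :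
    (shiftByPow j q c).coeff r = (Polynomial.C c).coeff r := by
  induction c using MvPolynomial.induction_on generalizing r with
  | C a => simp [shiftByPow, Polynomial.coeff_C]
  | add f g hf hg => simp only [map_add, Polynomial.coeff_add, hf hr, hg hr]
  | mul_X f i hf =>
    have hshift : (shiftByPow j q f * if i = j then Polynomial.X ^ q else 0).coeff r = 0 := by
      split_ifs
      · rw [Polynomial.coeff_mul_X_pow', if_neg (by omega)]
      · rw [mul_zero, Polynomial.coeff_zero]
    rw [map_mul, shiftByPow_X, mul_add, Polynomial.coeff_add, Polynomial.coeff_mul_C, hf hr,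
      hshift, add_zero, Polynomial.C_mul, Polynomial.coeff_mul_C]

theorem coeff_shiftByPow_self (j : σ) {q : ℕ} (hq : q ≠ 0) (c : MvPolynomial σ A) :
    (shiftByPow j q c).coeff q = pderiv j c := by
  induction c using MvPolynomial.induction_on with
  | C a => simp [shiftByPow, Polynomial.coeff_C, hq]
  | add f g hf hg => simp only [map_add, Polynomial.coeff_add, hf, hg]
  | mul_X f i hf =>
    rw [map_mul, shiftByPow_X, mul_add, Polynomial.coeff_add, Polynomial.coeff_mul_C, hf,
      pderiv_mul]
    rcases eq_or_ne i j with rfl | hij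
    · rw [if_pos rfl, Polynomial.coeff_mul_X_pow', if_pos le_rfl, Nat.sub_self,
        coeff_shiftByPow_of_lt i (Nat.pos_of_ne_zero hq), Polynomial.coeff_C_zero, pderiv_X_self,
        mul_one]
    · simp [hij]

noncomputable def shiftCoeffsByPow (j : σ) (q : ℕ) :
    (MvPolynomial σ A)[X] →+* (MvPolynomial σ A)[X] :=
  Polynomial.eval₂RingHom (shiftByPow (A := A) j q).toRingHom Polynomial.X

theorem coeff_shiftCoeffsByPow_self (j : σ) {q : ℕ} (hq : q ≠ 0) (F : (MvPolynomial σ A)[X]) :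
    (shiftCoeffsByPow j q F).coeff q = pderiv j (F.coeff 0) + F.coeff q := by
  induction F using Polynomial.induction_on' with
  | add F G hF hG =>
    simp only [map_add, Polynomial.coeff_add, hF, hG]
    abel
  | monomial n a =>
    rw [shiftCoeffsByPow, Polynomial.coe_eval₂RingHom, Polynomial.eval₂_monomial,
      AlgHom.toRingHom_eq_coe, RingHom.coe_coe, Polynomial.coeff_mul_X_pow',
      Polynomial.coeff_monomial, Polynomial.coeff_monomial]
    rcases Nat.eq_zero_or_pos n with rfl | hn
    · rw [if_pos (Nat.zero_le q), Nat.sub_zero, coeff_shiftByPow_self j hq, if_pos rfl,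
        if_neg (Ne.symm hq), add_zero]
    rcases lt_trichotomy n q with hlt | rfl | hgt
    · rw [if_pos hlt.le, coeff_shiftByPow_of_lt j (Nat.sub_lt (by omega) hn), Polynomial.coeff_C,
        if_neg (by omega), if_neg hn.ne', if_neg hlt.ne, map_zero, add_zero]
    · rw [if_pos le_rfl, Nat.sub_self, coeff_shiftByPow_of_lt j hn, Polynomial.coeff_C_zero,
        if_neg hn.ne', if_pos rfl, map_zero, zero_add]
    · rw [if_neg hgt.not_ge, if_neg hn.ne', if_neg hgt.ne', map_zero, add_zero]

end Shift

section Translation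

variable {σ A : Type*} [CommSemiring A]

/-- The `x_i` are the variables `Sum.inl i`, the `Y_i` the variables `Sum.inr i`. -/
noncomputable def translateByPow (e : σ → ℕ) :
    MvPolynomial (σ ⊕ σ) A →ₐ[A] MvPolynomial (σ ⊕ σ) A :=
  aeval (Sum.elim (fun i => X (Sum.inl i)) (fun i => X (Sum.inr i) + X (Sum.inl i) ^ e i))

noncomputable def evalInlZero : MvPolynomial (σ ⊕ σ) A →ₐ[A] MvPolynomial σ A :=
  aeval (Sum.elim (fun _ => 0) X)

variable [DecidableEq σ]

noncomputable def specializeInl (j : σ) : MvPolynomial (σ ⊕ σ) A →ₐ[A] (MvPolynomial σ A)[X] :=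
  aeval (Sum.elim (fun i => if i = j then Polynomial.X else 0) (fun i => Polynomial.C (X i)))

theorem coeff_zero_specializeInl (j : σ) (f : MvPolynomial (σ ⊕ σ) A) :
    (specializeInl j f).coeff 0 = evalInlZero f := by
  have h : Polynomial.constantCoeff.comp (specializeInl j).toRingHom =
      (evalInlZero : MvPolynomial (σ ⊕ σ) A →ₐ[A] MvPolynomial σ A).toRingHom := by
    ext i
    · simp [specializeInl, evalInlZero]
    · rcases i with i | i
      · by_cases hij : i = j <;> simp [specializeInl, evalInlZero, hij]
      · simp [specializeInl, evalInlZero]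
  exact congr($h f)

theorem shiftCoeffsByPow_specializeInl {e : σ → ℕ} (he : ∀ i, e i ≠ 0) (j : σ)
    (f : MvPolynomial (σ ⊕ σ) A) :
    shiftCoeffsByPow j (e j) (specializeInl j f) = specializeInl j (translateByPow e f) := by
  have h : (shiftCoeffsByPow j (e j)).comp (specializeInl j).toRingHom =
      (specializeInl j).toRingHom.comp
        (translateByPow e : MvPolynomial (σ ⊕ σ) A →ₐ[A] _).toRingHom := by
    ext i
    · simp [specializeInl, translateByPow, shiftCoeffsByPow]
    · rcases i with i | i
      · by_cases hij : i = j <;> simp [specializeInl, translateByPow, shiftCoeffsByPow, hij]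
      · by_cases hij : i = j
        · subst hij
          simp [specializeInl, translateByPow, shiftCoeffsByPow, shiftByPow]
        · simp [specializeInl, translateByPow, shiftCoeffsByPow, shiftByPow, hij, he i]
  exact congr($h f)

end Translation

theorem pderiv_evalInlZero_eq_zero {σ A : Type*} [CommRing A] [DecidableEq σ] {e : σ → ℕ}
    (he : ∀ i, e i ≠ 0) {f : MvPolynomial (σ ⊕ σ) A} (hf : translateByPow e f = f) (j : σ) :
    pderiv j (evalInlZero f) = 0 := by
  have h := coeff_shiftCoeffsByPow_self j (he j) (specializeInl j f)
  rwa [shiftCoeffsByPow_specializeInl he, hf, coeff_zero_specializeInl, right_eq_add] at h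

section CharP

variable {σ R : Type*} [CommSemiring R]

theorem dvd_of_mem_support_of_forall_pderiv_eq_zero (p : ℕ) [NoZeroDivisors R] [CharP R p]
    {g : MvPolynomial σ R} (hg : ∀ j, pderiv j g = 0) {d : σ →₀ ℕ} (hd : d ∈ g.support)
    (j : σ) : p ∣ d j := by
  classical
  by_cases hdj : d j = 0
  · exact hdj ▸ dvd_zero p
  have hle : Finsupp.single j 1 ≤ d := Finsupp.single_le_iff.mpr (Nat.one_le_iff_ne_zero.mpr hdj)
  have h := coeff_pderiv (i := j) g (d - Finsupp.single j 1)
  rw [hg j, coeff_zero, tsub_add_cancel_of_le hle, Finsupp.tsub_apply, Finsupp.single_eq_same,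
    ← Nat.cast_add_one, Nat.sub_add_cancel (Nat.one_le_iff_ne_zero.mpr hdj)] at h
  exact (CharP.cast_eq_zero_iff R p _).mp
    ((mul_eq_zero.mp h.symm).resolve_left (mem_support_iff.mp hd))

theorem mem_adjoin_X_pow_of_forall_dvd {n : ℕ} {g : MvPolynomial σ R}
    (hg : ∀ d ∈ g.support, ∀ j, n ∣ d j) :
    g ∈ Algebra.adjoin R (Set.range fun j => (X j : MvPolynomial σ R) ^ n) := by
  rw [g.as_sum]
  refine Subalgebra.sum_mem _ fun d hd => ?_
  rw [monomial_eq, ← algebraMap_eq]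
  refine Subalgebra.mul_mem _ (Subalgebra.algebraMap_mem _ _) (Subalgebra.prod_mem _ fun j _ => ?_)
  obtain ⟨m, hm⟩ := hg d hd j
  rw [hm]
  simp only [pow_mul]
  exact pow_mem (Algebra.subset_adjoin (Set.mem_range_self j)) m

end CharP

end MvPolynomial

/-- Let `Z/p` act on `F_p[x_1,…,x_t, Y_1,…,Y_t]` (the `x_j` are the `Sum.inl`
variables, the `Y_j = y_j^{p^{k_j}}` the `Sum.inr` variables) by `σ(x_j) = x_j` and
`σ(Y_j) = Y_j + x_j^{p^{k_j}}`.  Then the image of the invariant subring under the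
quotient map setting all `x_j = 0` (landing in `F_p[Y_1,…,Y_t]`) is contained in
`F_p[Y_1^p,…,Y_t^p]`. -/
theorem stmt9 (p t : ℕ) (hp : p.Prime) (k : Fin t → ℕ) :
    {g : MvPolynomial (Fin t) (ZMod p) |
        ∃ f : MvPolynomial (Fin t ⊕ Fin t) (ZMod p),
          aeval (Sum.elim
              (fun j => (X (Sum.inl j) : MvPolynomial (Fin t ⊕ Fin t) (ZMod p)))
              (fun j => X (Sum.inr j) + X (Sum.inl j) ^ p ^ (k j))) f = f ∧
          aeval (Sum.elim (fun _ => (0 : MvPolynomial (Fin t) (ZMod p)))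
              (fun j => X j)) f = g} ⊆
      ↑(Algebra.adjoin (ZMod p)
          (Set.range fun j : Fin t => (X j : MvPolynomial (Fin t) (ZMod p)) ^ p)) := by
  rintro _ ⟨f, hf, rfl⟩
  have : Fact p.Prime := ⟨hp⟩
  have hderiv : ∀ j, pderiv j (evalInlZero f) = 0 :=
    pderiv_evalInlZero_eq_zero (e := fun i => p ^ k i) (fun i => pow_ne_zero _ hp.ne_zero) hf
  exact mem_adjoin_X_pow_of_forall_dvd fun d hd =>
    dvd_of_mem_support_of_forall_pderiv_eq_zero p hderiv hd
end

section
/- Let p be an odd prime and let Z/p act on the polynomial ring F_p[y_1,...,y_p] by cyclically permuting the variables. Then the image of the invariant ring F_p[y_1,...,y_p]^{Z/p} under the 'diagonal' algebra map sending each y_i to y (into F_p[y]) is exactly F_p[y^p]. -/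
/-!
Writing `Δ` for the diagonal map `yᵢ ↦ y`, the chain rule gives `(Δ f)' = ∑ᵢ Δ(∂f/∂yᵢ)`. If `f` is
invariant under the cyclic shift, then `Δ(∂f/∂yᵢ₊₁) = Δ(∂f/∂yᵢ)`, so the sum consists of `p` equal
terms and vanishes in characteristic `p`. A polynomial over `𝔽_p` with zero derivative is a polynomial
in `y^p`. Conversely `y^p` is the image of the invariant `y₁ ⋯ y_p`.
-/

open MvPolynomial

section Diagonal

variable {σ R : Type*} [CommSemiring R]

theorem derivative_aeval_X [Fintype σ] [DecidableEq σ] (f : MvPolynomial σ R) :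
    Polynomial.derivative (aeval (fun _ : σ => (Polynomial.X : Polynomial R)) f) =
      ∑ i : σ, aeval (fun _ : σ => (Polynomial.X : Polynomial R)) (pderiv i f) := by
  induction f using MvPolynomial.induction_on with
  | C a => simp
  | add f g hf hg => simp [hf, hg, Finset.sum_add_distrib]
  | mul_X f j hf =>
    simp only [map_mul, aeval_X, Polynomial.derivative_mul, Polynomial.derivative_X, mul_one, hf,
      Derivation.leibniz, pderiv_X, smul_eq_mul, map_add, Finset.sum_add_distrib]
    simp [Pi.single_apply, Finset.mul_sum, mul_comm, add_comm]

theorem aeval_const_pderiv_eq_of_rename_eq {S : Type*} [CommSemiring S] [Algebra R S]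
    [DecidableEq σ] {e : σ → σ} (he : Function.Injective e) {f : MvPolynomial σ R}
    (hf : rename e f = f) (a : S) (i : σ) :
    aeval (fun _ => a) (pderiv (e i) f) = aeval (fun _ => a) (pderiv i f) := by
  conv_lhs => rw [← hf]
  rw [pderiv_rename he, aeval_rename]
  rfl

theorem rename_prod_X_of_bijective [Fintype σ] {e : σ → σ} (he : Function.Bijective e) :
    rename e (∏ i : σ, (X i : MvPolynomial σ R)) = ∏ i : σ, X i := by
  simp only [map_prod, rename_X]
  exact Fintype.prod_bijective e he _ _ fun _ => rfl

theorem aeval_X_prod_X [Fintype σ] :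
    aeval (fun _ : σ => (Polynomial.X : Polynomial R)) (∏ i : σ, (X i : MvPolynomial σ R)) =
      Polynomial.X ^ Fintype.card σ := by
  simp

end Diagonal

theorem aeval_const_pderiv_eq_pderiv_zero_of_rename_add_one {n : ℕ} [NeZero n] {R S : Type*} [CommSemiring R]
    [CommSemiring S] [Algebra R S] {f : MvPolynomial (ZMod n) R}
    (hf : rename (fun i => i + 1) f = f) (a : S) (i : ZMod n) :
    aeval (fun _ => a) (pderiv i f) = aeval (fun _ => a) (pderiv 0 f) := by
  suffices h : ∀ k : ℕ, aeval (fun _ => a) (pderiv (k : ZMod n) f) = aeval (fun _ => a) (pderiv 0 f) by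
    simpa using h i.val
  intro k
  induction k with
  | zero => simp
  | succ k ih =>
    rw [Nat.cast_succ, aeval_const_pderiv_eq_of_rename_eq (add_left_injective 1) hf, ih]

theorem derivative_aeval_X_eq_zero_of_rename_add_one {n : ℕ} [NeZero n] {R : Type*} [CommRing R]
    [CharP R n] {f : MvPolynomial (ZMod n) R} (hf : rename (fun i => i + 1) f = f) :
    Polynomial.derivative (aeval (fun _ => (Polynomial.X : Polynomial R)) f) = 0 := by
  rw [derivative_aeval_X, Finset.sum_congr rfl fun i _ =>
      aeval_const_pderiv_eq_pderiv_zero_of_rename_add_one hf Polynomial.X i,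
    Finset.sum_const, Finset.card_univ, ZMod.card, nsmul_eq_mul,
    CharP.cast_eq_zero (Polynomial R) n, zero_mul]

theorem mem_adjoin_X_pow_of_derivative_eq_zero {R : Type*} [CommRing R] [NoZeroDivisors R]
    {p : ℕ} [CharP R p] (hp : p ≠ 0) {g : Polynomial R} (hg : Polynomial.derivative g = 0) :
    g ∈ Algebra.adjoin R {(Polynomial.X : Polynomial R) ^ p} := by
  rw [Algebra.adjoin_singleton_eq_range_aeval, AlgHom.mem_range]
  refine ⟨Polynomial.contract p g, ?_⟩
  rw [← Polynomial.comp_eq_aeval, ← Polynomial.expand_eq_comp_X_pow]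
  exact Polynomial.expand_contract p hg hp

theorem stmt11_general (p : ℕ) (hp : p.Prime) :
    {g : Polynomial (ZMod p) |
        ∃ f : MvPolynomial (ZMod p) (ZMod p),
          rename (fun i => i + 1) f = f ∧
          aeval (fun _ : ZMod p => (Polynomial.X : Polynomial (ZMod p))) f = g} =
      ↑(Algebra.adjoin (ZMod p) {(Polynomial.X : Polynomial (ZMod p)) ^ p}) := by
  have : Fact p.Prime := ⟨hp⟩
  ext g
  constructor
  · rintro ⟨f, hf, rfl⟩
    exact mem_adjoin_X_pow_of_derivative_eq_zero hp.ne_zero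
      (derivative_aeval_X_eq_zero_of_rename_add_one hf)
  · intro hg
    rw [SetLike.mem_coe, Algebra.adjoin_singleton_eq_range_aeval, AlgHom.mem_range] at hg
    obtain ⟨q, rfl⟩ := hg
    refine ⟨Polynomial.aeval (∏ i : ZMod p, X i) q, ?_, ?_⟩
    · rw [← Polynomial.aeval_algHom_apply, rename_prod_X_of_bijective (AddGroup.addRight_bijective 1)]
    · rw [← Polynomial.aeval_algHom_apply, aeval_X_prod_X, ZMod.card]

/-- Let `p` be an odd prime and let `Z/p` act on `F_p[y_1,…,y_p]` (variables indexed by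
`ZMod p`) by cyclically permuting the variables.  The image of the invariant ring under
the diagonal map `y_i ↦ y` into `F_p[y]` is exactly `F_p[y^p]`. -/
theorem stmt11 (p : ℕ) (hp : p.Prime) (hodd : p ≠ 2) :
    {g : Polynomial (ZMod p) |
        ∃ f : MvPolynomial (ZMod p) (ZMod p),
          rename (fun i => i + 1) f = f ∧
          aeval (fun _ : ZMod p => (Polynomial.X : Polynomial (ZMod p))) f = g} =
      ↑(Algebra.adjoin (ZMod p) {(Polynomial.X : Polynomial (ZMod p)) ^ p}) :=
  stmt11_general p hp
end

section
/- Let R be a graded Noetherian commutative ring with maximal graded ideal 𝔪, let M be a graded R-module, and fix integers s, t. Suppose the local cohomology groups H_𝔪^{s',t'}(M) vanish for all s' < s, and also H_𝔪^{s,t'}(M) = 0 for all t' > t. If z ∈ R is homogeneous of degree |z| and is a nonzerodivisor on M, then H_𝔪^{s',t'}(M/zM) = 0 for all s' < s−1 and for all (s−1, t') with t' > t + |z|, and moreover H_𝔪^{s−1, t+|z|}(M/zM) ≅ H_𝔪^{s,t}(M). -/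
/-!
In the long exact sequence
`H^{s',t'}(M) → H^{s',t'}(M/zM) →^δ H^{s'+1,t'-d}(M) →^{·z} H^{s'+1,t'}(M)`
the group `H^{s',t'}(M/zM)` is squeezed between two vanishing groups whenever `s' + 1 < s`, or
`s' + 1 = s` and `t' - d > t`. In bidegree `(s - 1, t + d)` the left neighbour still vanishes,
so `δ` is injective, and the group `H^{s,t+d}(M)` after `H^{s,t}(M)` vanishes because `d > 0`,
so `δ` is also surjective.
-/

namespace Function.Exact

variable {M N P : Type*} {f : M → N} {g : N → P}

theorem subsingleton [Zero P] [Subsingleton M] [Subsingleton P] (h : Exact f g) :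
    Subsingleton N where
  allEq y y' := by
    obtain ⟨x, rfl⟩ := (h y).mp (Subsingleton.elim _ _)
    obtain ⟨x', rfl⟩ := (h y').mp (Subsingleton.elim _ _)
    rw [Subsingleton.elim x x']

theorem surjective_of_subsingleton [Zero P] [Subsingleton P] (h : Exact f g) : Surjective f :=
  fun y ↦ (h y).mp (Subsingleton.elim _ _)

theorem injective_of_subsingleton [AddGroup N] [AddGroup P] [Subsingleton M] {g : N →+ P}
    (h : Exact f g) : Injective g := by
  obtain ⟨x₀, hx₀⟩ := (h 0).mp (map_zero g)
  refine (injective_iff_map_eq_zero g).mpr fun y hy ↦ ?_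
  obtain ⟨x, rfl⟩ := (h y).mp hy
  rw [Subsingleton.elim x x₀, hx₀]

end Function.Exact

/-- `H s t` stands for `H_𝔪^{s,t}(M)` and `Hq s t` for `H_𝔪^{s,t}(M/zM)`, where `z` is a
homogeneous nonzerodivisor on `M` of degree `d`; `mulz`, `pr`, `δ` are the maps of the long exact
sequence `⋯ → H^{s,t}(M) →^{·z} H^{s,t+d}(M) → H^{s,t+d}(M/zM) →^δ H^{s+1,t}(M) → ⋯`
of `0 → Σ^d M →^z M → M/zM → 0`. -/
theorem stmt12_general (H Hq : ℕ → ℤ → Type)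
    [∀ s t, AddCommGroup (H s t)] [∀ s t, AddCommGroup (Hq s t)]
    (d : ℤ) (hd : 0 < d)
    (mulz : ∀ s t, H s t →+ H s (t + d))
    (pr : ∀ s t, H s t →+ Hq s t)
    (δ : ∀ s t, Hq s t →+ H (s + 1) (t - d))
    (hex2 : ∀ s t, Function.Exact (pr s t) (δ s t))
    (hex3 : ∀ s t, Function.Exact (δ s t) (mulz (s + 1) (t - d)))
    (s : ℕ) (t : ℤ) (hs : 1 ≤ s)
    (hv1 : ∀ s' < s, ∀ t' : ℤ, Subsingleton (H s' t'))
    (hv2 : ∀ t' > t, Subsingleton (H s t')) :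
    (∀ s' < s - 1, ∀ t' : ℤ, Subsingleton (Hq s' t')) ∧
    (∀ t' > t + d, Subsingleton (Hq (s - 1) t')) ∧
    Nonempty (Hq (s - 1) (t + d) ≃+ H s t) := by
  obtain ⟨n, rfl⟩ : ∃ n, s = n + 1 := ⟨s - 1, by omega⟩
  refine ⟨fun s' hs' t' ↦ ?_, fun t' ht' ↦ ?_, ?_⟩
  · have := hv1 s' (by omega) t'
    have := hv1 (s' + 1) (by omega) (t' - d)
    exact (hex2 s' t').subsingleton
  · have := hv1 n (by omega) t'
    have := hv2 (t' - d) (by omega)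
    exact (hex2 n t').subsingleton
  · have := hv1 n (by omega) (t + d)
    have := hv2 (t + d - d + d) (by omega)
    have δ_bijective : Function.Bijective (δ n (t + d)) :=
      ⟨(hex2 n (t + d)).injective_of_subsingleton, (hex3 n (t + d)).surjective_of_subsingleton⟩
    have e := AddEquiv.ofBijective _ δ_bijective
    rw [add_sub_cancel_right] at e
    exact ⟨e⟩

/-- Graded local cohomology, abstracted: `H s t` stands for `H_𝔪^{s,t}(M)` and `Hq s t`
for `H_𝔪^{s,t}(M/zM)`, where `z` is a homogeneous nonzerodivisor on `M` of degree `d`.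
The short exact sequence `0 → Σ^d M →^z M → M/zM → 0` yields the long exact sequence
`⋯ → H^{s,t}(M) →^{·z} H^{s,t+d}(M) → H^{s,t+d}(M/zM) →^δ H^{s+1,t}(M) → ⋯`, encoded by
the maps `mulz`, `pr`, `δ` and the exactness hypotheses below.  If `H^{s',t'}(M) = 0` for
all `s' < s` and `H^{s,t'}(M) = 0` for all `t' > t`, then `H^{s',t'}(M/zM) = 0` for all
`s' < s - 1`, `H^{s-1,t'}(M/zM) = 0` for all `t' > t + d`, and
`H^{s-1,t+d}(M/zM) ≅ H^{s,t}(M)`. -/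
theorem stmt12 (H Hq : ℕ → ℤ → Type)
    [∀ s t, AddCommGroup (H s t)] [∀ s t, AddCommGroup (Hq s t)]
    (d : ℤ) (hd : 0 < d)
    (mulz : ∀ s t, H s t →+ H s (t + d))
    (pr : ∀ s t, H s t →+ Hq s t)
    (δ : ∀ s t, Hq s t →+ H (s + 1) (t - d))
    (hex1 : ∀ s t, Function.Exact (mulz s t) (pr s (t + d)))
    (hex2 : ∀ s t, Function.Exact (pr s t) (δ s t))
    (hex3 : ∀ s t, Function.Exact (δ s t) (mulz (s + 1) (t - d)))
    (s : ℕ) (t : ℤ) (hs : 1 ≤ s)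
    (hv1 : ∀ s' < s, ∀ t' : ℤ, Subsingleton (H s' t'))
    (hv2 : ∀ t' > t, Subsingleton (H s t')) :
    (∀ s' < s - 1, ∀ t' : ℤ, Subsingleton (Hq s' t')) ∧
    (∀ t' > t + d, Subsingleton (Hq (s - 1) t')) ∧
    Nonempty (Hq (s - 1) (t + d) ≃+ H s t) :=
  stmt12_general H Hq d hd mulz pr δ hex2 hex3 s t hs hv1 hv2
end
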